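/- Let (t_k) be a sequence in [0, t_max] with Σ_k |t_k − t_max| < ∞, and let (T_t)_{t ∈ [0,1]} be a family of operators on R^d such that ‖T_s(w) − T_t(w)‖ ≤ C·|s − t| for all w and s,t. If T* = T_{t_max} is averaged and has a fixed point, then the iteration w_{k+1} = T_{t_k}(w_k) converges to a fixed point of T*. -/

import Mathlib

/-!
Write `T* = (1 - λ) I + λ N`. The iteration is an inexact Krasnosel'skiĭ–Mann iteration
`w_{k+1} = T* w_k + e_k` whose errors satisfy `‖e_k‖ ≤ C |t_k - t_max|`, hence are summable.
For every fixed point `z` this makes `‖w_k - z‖` quasi-Fejér: `‖w_{k+1} - z‖ ≤ ‖w_k - z‖ + ‖e_k‖`,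
so `‖w_k - z‖ + Σ_{i ≥ k} ‖e_i‖` is nonincreasing. Hence the iterates are bounded, and the
averagedness inequality `‖T* x - z‖² + λ(1 - λ)‖x - N x‖² ≤ ‖x - z‖²` telescopes to show that the
residuals `‖w_k - N w_k‖` tend to `0`. By compactness a subsequence converges, its limit is a fixed
point by continuity of `N`, and the monotone quantity above, taken at that limit, forces the whole
sequence to converge to it.
-/

open Filter Topology

section QuasiFejer

variable {X : Type*} [PseudoMetricSpace X] {u : ℕ → X} {z : X} {ε : ℕ → ℝ}

theorem antitone_dist_add_tsum_tail (hε : Summable ε)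
    (hstep : ∀ k, dist (u (k + 1)) z ≤ dist (u k) z + ε k) :
    Antitone fun k => dist (u k) z + ∑' i, ε (i + k) := by
  refine antitone_nat_of_succ_le fun k => ?_
  have htail : ∑' i, ε (i + k) = ε k + ∑' i, ε (i + (k + 1)) := by
    rw [((summable_nat_add_iff k).2 hε).tsum_eq_zero_add, zero_add]
    simp only [add_right_comm _ 1 k, add_assoc]
  linarith [hstep k]

theorem dist_le_of_quasiFejer (hε : Summable ε) (hε0 : ∀ k, 0 ≤ ε k)
    (hstep : ∀ k, dist (u (k + 1)) z ≤ dist (u k) z + ε k) (k : ℕ) :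
    dist (u k) z ≤ dist (u 0) z + ∑' i, ε i := by
  have h := antitone_dist_add_tsum_tail hε hstep (Nat.zero_le k)
  simp only [add_zero] at h
  linarith [(tsum_nonneg fun i => hε0 (i + k) : 0 ≤ ∑' i, ε (i + k))]

theorem tendsto_of_quasiFejer_of_subseq (hε : Summable ε) (hε0 : ∀ k, 0 ≤ ε k)
    (hstep : ∀ k, dist (u (k + 1)) z ≤ dist (u k) z + ε k) {φ : ℕ → ℕ} (hφ : StrictMono φ)
    (hsub : Tendsto (u ∘ φ) atTop (𝓝 z)) : Tendsto u atTop (𝓝 z) := by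
  set b := fun k => dist (u k) z + ∑' i, ε (i + k)
  have hb_anti : Antitone b := antitone_dist_add_tsum_tail hε hstep
  have hb_nonneg : ∀ k, 0 ≤ b k := fun k =>
    add_nonneg dist_nonneg (tsum_nonneg fun i => hε0 (i + k))
  have hb_sub : Tendsto (b ∘ φ) atTop (𝓝 0) := by
    show Tendsto (fun k => dist (u (φ k)) z + ∑' i, ε (i + φ k)) atTop (𝓝 0)
    have hdist := tendsto_iff_dist_tendsto_zero.1 hsub
    have htail := (tendsto_sum_nat_add ε).comp hφ.tendsto_atTop
    simpa using hdist.add htail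
  have hb_inf := tendsto_atTop_ciInf hb_anti ⟨0, Set.forall_mem_range.2 hb_nonneg⟩
  have hb : Tendsto b atTop (𝓝 0) := by
    rwa [tendsto_nhds_unique hb_sub (hb_inf.comp hφ.tendsto_atTop)]
  refine tendsto_iff_dist_tendsto_zero.2 (squeeze_zero (fun _ => dist_nonneg) (fun k => ?_) hb)
  exact le_add_of_nonneg_right (tsum_nonneg fun i => hε0 (i + k))

end QuasiFejer

theorem summable_of_le_sub_succ_add {c s δ : ℕ → ℝ} (hc : ∀ k, 0 ≤ c k) (hs : ∀ k, 0 ≤ s k)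
    (hδ : Summable δ) (hδ0 : ∀ k, 0 ≤ δ k) (h : ∀ k, c k ≤ s k - s (k + 1) + δ k) :
    Summable c := by
  refine summable_of_sum_range_le (c := s 0 + ∑' k, δ k) hc fun n => ?_
  calc ∑ k ∈ Finset.range n, c k
      ≤ ∑ k ∈ Finset.range n, (s k - s (k + 1) + δ k) := Finset.sum_le_sum fun k _ => h k
    _ = s 0 - s n + ∑ k ∈ Finset.range n, δ k := by
      rw [Finset.sum_add_distrib, Finset.sum_range_sub']
    _ ≤ s 0 + ∑' k, δ k := by
      linarith [hs n, hδ.sum_le_tsum (Finset.range n) fun k _ => hδ0 k]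

section Averaged

variable {E : Type*} [NormedAddCommGroup E] [InnerProductSpace ℝ E] {A N : E → E} {lam : ℝ}
  {w : ℕ → E} {z : E}

theorem norm_one_sub_smul_add_smul_sq (lam : ℝ) (u v : E) :
    ‖(1 - lam) • u + lam • v‖ ^ 2
      = (1 - lam) * ‖u‖ ^ 2 + lam * ‖v‖ ^ 2 - lam * (1 - lam) * ‖u - v‖ ^ 2 := by
  rw [norm_add_sq_real, norm_sub_sq_real, norm_smul, norm_smul, real_inner_smul_left,
    real_inner_smul_right, Real.norm_eq_abs, Real.norm_eq_abs, mul_pow, mul_pow, sq_abs, sq_abs]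
  ring

theorem averaged_eq_self_iff (hlam : lam ≠ 0) (x : E) :
    (1 - lam) • x + lam • N x = x ↔ N x = x := by
  have h : (1 - lam) • x + lam • N x - x = lam • (N x - x) := by module
  rw [← sub_eq_zero, h, smul_eq_zero, sub_eq_zero, or_iff_right hlam]

theorem norm_averaged_sub_sq_add_le (hlam : 0 ≤ lam) {x p : E} (hxp : ‖N x - p‖ ≤ ‖x - p‖) :
    ‖(1 - lam) • x + lam • N x - p‖ ^ 2 + lam * (1 - lam) * ‖x - N x‖ ^ 2 ≤ ‖x - p‖ ^ 2 := by
  have hcomb : (1 - lam) • x + lam • N x - p = (1 - lam) • (x - p) + lam • (N x - p) := by module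
  have hdiff : x - N x = (x - p) - (N x - p) := by abel
  rw [hcomb, hdiff, norm_one_sub_smul_add_smul_sq]
  nlinarith [pow_le_pow_left₀ (norm_nonneg _) hxp 2]

theorem dist_sq_add_le_of_averaged (hlam0 : 0 ≤ lam) (hN : ∀ x y, ‖N x - N y‖ ≤ ‖x - y‖)
    (hA : ∀ x, A x = (1 - lam) • x + lam • N x) (hz : N z = z) (x : E) :
    dist (A x) z ^ 2 + lam * (1 - lam) * ‖x - N x‖ ^ 2 ≤ dist x z ^ 2 := by
  simp only [dist_eq_norm]
  refine hA x ▸ norm_averaged_sub_sq_add_le hlam0 ?_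
  simpa [hz] using hN x z

theorem dist_le_of_averaged (hlam0 : 0 ≤ lam) (hlam1 : lam ≤ 1)
    (hN : ∀ x y, ‖N x - N y‖ ≤ ‖x - y‖) (hA : ∀ x, A x = (1 - lam) • x + lam • N x)
    (hz : N z = z) (x : E) : dist (A x) z ≤ dist x z :=
  le_of_pow_le_pow_left₀ two_ne_zero dist_nonneg <| by
    nlinarith [dist_sq_add_le_of_averaged hlam0 hN hA hz x, sq_nonneg ‖x - N x‖,
      mul_nonneg hlam0 (sub_nonneg.2 hlam1)]

theorem dist_succ_le_of_averaged (hlam0 : 0 ≤ lam) (hlam1 : lam ≤ 1)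
    (hN : ∀ x y, ‖N x - N y‖ ≤ ‖x - y‖) (hA : ∀ x, A x = (1 - lam) • x + lam • N x)
    (hz : N z = z) (k : ℕ) :
    dist (w (k + 1)) z ≤ dist (w k) z + dist (w (k + 1)) (A (w k)) := by
  linarith [dist_triangle (w (k + 1)) (A (w k)) z, dist_le_of_averaged hlam0 hlam1 hN hA hz (w k)]

theorem summable_residual_of_averaged (hlam0 : 0 ≤ lam) (hlam1 : lam ≤ 1)
    (hN : ∀ x y, ‖N x - N y‖ ≤ ‖x - y‖) (hA : ∀ x, A x = (1 - lam) • x + lam • N x)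
    (hz : N z = z) (he : Summable fun k => dist (w (k + 1)) (A (w k))) :
    Summable fun k => lam * (1 - lam) * ‖w k - N (w k)‖ ^ 2 := by
  set e := fun k => dist (w (k + 1)) (A (w k))
  have he0 : ∀ k, 0 ≤ e k := fun _ => dist_nonneg
  set M := dist (w 0) z + ∑' k, e k
  have hbdd : ∀ k, dist (w k) z ≤ M :=
    dist_le_of_quasiFejer he he0 (dist_succ_le_of_averaged hlam0 hlam1 hN hA hz)
  refine summable_of_le_sub_succ_add (s := fun k => dist (w k) z ^ 2)
    (δ := fun k => 2 * M * e k)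
    (fun k => mul_nonneg (mul_nonneg hlam0 (sub_nonneg.2 hlam1)) (sq_nonneg _))
    (fun k => sq_nonneg _) (he.mul_left _)
    (fun k => mul_nonneg (by linarith [hbdd 0, dist_nonneg (x := w 0) (y := z)]) (he0 k))
    fun k => ?_
  -- `a := dist (w (k + 1)) z ≤ b + e k` for `b := dist (A (w k)) z`, and `a, b ≤ M`, so
  -- `a² - b² = (a - b)(a + b) ≤ 2 M e k`
  have hnext : dist (w (k + 1)) z ≤ dist (A (w k)) z + e k :=
    (dist_triangle _ _ _).trans_eq (add_comm _ _)
  nlinarith [dist_sq_add_le_of_averaged hlam0 hN hA hz (w k),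
    dist_le_of_averaged hlam0 hlam1 hN hA hz (w k), hbdd k, hbdd (k + 1), he0 k,
    mul_nonneg (sub_nonneg.2 hnext) (add_nonneg (dist_nonneg (x := w (k + 1)) (y := z))
      (dist_nonneg (x := A (w k)) (y := z)))]

theorem exists_fixedPoint_tendsto_of_summable_dist_averaged [ProperSpace E] (hlam0 : 0 < lam)
    (hlam1 : lam < 1) (hN : ∀ x y, ‖N x - N y‖ ≤ ‖x - y‖)
    (hA : ∀ x, A x = (1 - lam) • x + lam • N x) (hfix : ∃ p, A p = p)
    (he : Summable fun k => dist (w (k + 1)) (A (w k))) :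
    ∃ x, A x = x ∧ Tendsto w atTop (𝓝 x) := by
  have hfix_iff : ∀ z, A z = z ↔ N z = z := fun z => hA z ▸ averaged_eq_self_iff hlam0.ne' z
  have hstep : ∀ z, N z = z → ∀ k, dist (w (k + 1)) z ≤ dist (w k) z + dist (w (k + 1)) (A (w k)) :=
    fun z hz => dist_succ_le_of_averaged hlam0.le hlam1.le hN hA hz
  obtain ⟨p, hp⟩ := hfix
  rw [hfix_iff] at hp
  have hbdd := dist_le_of_quasiFejer he (fun _ => dist_nonneg) (hstep p hp)
  obtain ⟨x, -, φ, hφ, hx⟩ := tendsto_subseq_of_bounded Metric.isBounded_closedBall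
    fun k => Metric.mem_closedBall.2 (hbdd k)
  have hNx : N x = x := by
    have hNc : Continuous N := (LipschitzWith.of_dist_le_mul (K := 1) fun x y => by
      simpa [dist_eq_norm] using hN x y).continuous
    have hcont : Continuous fun y => lam * (1 - lam) * ‖y - N y‖ ^ 2 := by fun_prop
    have hres := (summable_residual_of_averaged hlam0.le hlam1.le hN hA hp he).tendsto_atTop_zero
    have h0 := tendsto_nhds_unique ((hcont.tendsto x).comp hx) (hres.comp hφ.tendsto_atTop)
    simpa [(mul_pos hlam0 (sub_pos.2 hlam1)).ne', sub_eq_zero, eq_comm] using h0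
  exact ⟨x, (hfix_iff x).2 hNx,
    tendsto_of_quasiFejer_of_subseq he (fun _ => dist_nonneg) (hstep x hNx) hφ hx⟩

end Averaged

/-- Convergence of FlowADMM with a varying time schedule: if `(t_k)` lies in
`[0, t_max]` with `Σ_k |t_k - t_max| < ∞`, the family `(T_t)` is uniformly
Lipschitz in `t` with constant `C`, and `T* = T_{t_max}` is averaged with a
fixed point, then the iteration `w_{k+1} = T_{t_k}(w_k)` converges to a fixed
point of `T*`. -/
theorem varying_schedule_convergence
    (d : ℕ) (C tmax : ℝ) (htmax0 : 0 ≤ tmax) (htmax1 : tmax ≤ 1)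
    (tk : ℕ → ℝ) (htk : ∀ k, tk k ∈ Set.Icc (0 : ℝ) tmax)
    (hsum : Summable (fun k => |tk k - tmax|))
    (T : ℝ → EuclideanSpace ℝ (Fin d) → EuclideanSpace ℝ (Fin d))
    (hTlip : ∀ s ∈ Set.Icc (0 : ℝ) 1, ∀ t ∈ Set.Icc (0 : ℝ) 1,
      ∀ w, ‖T s w - T t w‖ ≤ C * |s - t|)
    (lam : ℝ) (hlam0 : 0 < lam) (hlam1 : lam < 1)
    (N : EuclideanSpace ℝ (Fin d) → EuclideanSpace ℝ (Fin d))
    (hN : ∀ x y, ‖N x - N y‖ ≤ ‖x - y‖)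
    (hTstar : ∀ x, T tmax x = (1 - lam) • x + lam • N x)
    (hfix : ∃ p, T tmax p = p)
    (w : ℕ → EuclideanSpace ℝ (Fin d))
    (hiter : ∀ k, w (k + 1) = T (tk k) (w k)) :
    ∃ xstar, T tmax xstar = xstar ∧ Tendsto w atTop (𝓝 xstar) := by
  refine exists_fixedPoint_tendsto_of_summable_dist_averaged hlam0 hlam1 hN hTstar hfix ?_
  refine (hsum.mul_left C).of_nonneg_of_le (fun _ => dist_nonneg) fun k => ?_
  rw [hiter k, dist_eq_norm]
  exact hTlip _ ⟨(htk k).1, (htk k).2.trans htmax1⟩ _ ⟨htmax0, htmax1⟩ _
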